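/- arXiv:1511.05243 — 2 statements merged into one kernel-verified Lean document; each statement's English description precedes it below -/
import Mathlib

section
/- Let g be a semisimple Lie algebra over ℝ with Killing form B, σ an involution with (−1)-eigenspace q, X ∈ q, and ξ ∈ q with [ξ, X] = 0. Suppose ξ = ξ_s + ξ_n is the Jordan–Chevalley decomposition and there exists Z ∈ h (= (+1)-eigenspace of σ) with [Z, ξ_n] = ξ_n. Then B(ξ_n, X) = 0. -/
/-!
Since `ξ_s` and `ξ_n` commute, `ad ξ_s` and `ad ξ_n` preserve the centraliser of `ξ`, and there
`ad ξ_n = -ad ξ_s` is both nilpotent and semisimple, hence zero; so `[ξ_n, X] = 0`. Then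
`B(ξ_n, X) = B([Z, ξ_n], X) = B(Z, [ξ_n, X]) = 0` by invariance of the Killing form.
-/

namespace Module.End

variable {R M : Type*} [CommRing R] [AddCommGroup M] [Module R M]

lemma ker_mem_invtSubmodule_of_commute {f g : End R M} (h : Commute f g) :
    LinearMap.ker f ∈ g.invtSubmodule := by
  rw [mem_invtSubmodule]
  intro v hv
  simp only [Submodule.mem_comap, LinearMap.mem_ker] at hv ⊢
  rw [← mul_apply, h.eq, mul_apply, hv, map_zero]

lemma apply_eq_zero_of_add_apply_eq_zero {s n : End R M} (hs : s.IsSemisimple)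
    (hn : IsNilpotent n) (hsn : Commute s n) {v : M} (hv : (s + n) v = 0) : n v = 0 := by
  have hps := ker_mem_invtSubmodule_of_commute ((Commute.refl s).add_left hsn.symm)
  have hpn := ker_mem_invtSubmodule_of_commute (hsn.add_left (Commute.refl n))
  have hneg : n.restrict (p := LinearMap.ker (s + n)) (q := LinearMap.ker (s + n)) hpn =
      -s.restrict (p := LinearMap.ker (s + n)) (q := LinearMap.ker (s + n)) hps := by
    ext ⟨w, hw : (s + n) w = 0⟩
    exact eq_neg_iff_add_eq_zero.mpr ((add_comm _ _).trans hw)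
  have hzero : n.restrict (p := LinearMap.ker (s + n)) (q := LinearMap.ker (s + n)) hpn = 0 :=
    eq_zero_of_isNilpotent_isSemisimple (isNilpotent.restrict hpn hn)
      (hneg ▸ isSemisimple_neg.mpr (hs.restrict hps))
  exact congr_arg Subtype.val (LinearMap.congr_fun hzero ⟨v, hv⟩)

end Module.End

namespace LieAlgebra

variable {R L : Type*} [CommRing R] [LieRing L] [LieAlgebra R L]

lemma lie_eq_zero_of_lie_add_eq_zero {s n y : L} (hs : (ad R L s).IsSemisimple)
    (hn : IsNilpotent (ad R L n)) (hsn : ⁅s, n⁆ = 0) (hy : ⁅s + n, y⁆ = 0) : ⁅n, y⁆ = 0 := by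
  have hcomm : Commute (ad R L s) (ad R L n) := LinearMap.ext fun z ↦ by
    simp only [Module.End.mul_apply, ad_apply]
    rw [leibniz_lie, hsn, zero_lie, zero_add]
  exact Module.End.apply_eq_zero_of_add_apply_eq_zero hs hn hcomm
    (by rwa [LinearMap.add_apply, ad_apply, ad_apply, ← add_lie])

end LieAlgebra

theorem stmt3_general (L : Type*) [LieRing L] [LieAlgebra ℝ L] [FiniteDimensional ℝ L]
    (X ξ ξs ξn Z : L)
    (hcomm : ⁅ξ, X⁆ = 0)
    (hsum : ξ = ξs + ξn)
    (hs : (LieAlgebra.ad ℝ L ξs).IsSemisimple)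
    (hn : IsNilpotent (LieAlgebra.ad ℝ L ξn))
    (hsn : ⁅ξs, ξn⁆ = 0)
    (hZn : ⁅Z, ξn⁆ = ξn) :
    killingForm ℝ L ξn X = 0 := by
  have hnX : ⁅ξn, X⁆ = 0 :=
    LieAlgebra.lie_eq_zero_of_lie_add_eq_zero hs hn hsn (hsum ▸ hcomm)
  calc killingForm ℝ L ξn X = killingForm ℝ L ⁅Z, ξn⁆ X := by rw [hZn]
    _ = killingForm ℝ L Z ⁅ξn, X⁆ := LieModule.traceForm_apply_lie_apply ℝ L L Z ξn X
    _ = 0 := by rw [hnX, map_zero]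

/-- Real semisimple Lie algebra `L` with Killing form `B`, involution `σ`
with `(-1)`-eigenspace `q`; `X ∈ q`, `ξ ∈ q` with `[ξ, X] = 0`; if `ξ = ξs + ξn` is the
Jordan–Chevalley decomposition and there is `Z` in the `(+1)`-eigenspace `h` with
`[Z, ξn] = ξn`, then `B(ξn, X) = 0`. -/
theorem stmt3 (L : Type*) [LieRing L] [LieAlgebra ℝ L] [FiniteDimensional ℝ L]
    [LieAlgebra.IsSemisimple ℝ L]
    (σ : L →ₗ⁅ℝ⁆ L) (hσ : ∀ x, σ (σ x) = x)
    (X ξ ξs ξn Z : L)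
    (hX : σ X = -X) (hξ : σ ξ = -ξ) (hcomm : ⁅ξ, X⁆ = 0)
    (hsum : ξ = ξs + ξn)
    (hs : (LieAlgebra.ad ℝ L ξs).IsSemisimple)
    (hn : IsNilpotent (LieAlgebra.ad ℝ L ξn))
    (hsn : ⁅ξs, ξn⁆ = 0)
    (hZ : σ Z = Z) (hZn : ⁅Z, ξn⁆ = ξn) :
    killingForm ℝ L ξn X = 0 :=
  stmt3_general L X ξ ξs ξn Z hcomm hsum hs hn hsn hZn
end

section
/- Let R be the root system of type A_{2r-1} with simple roots α₁,…,α_{2r-1}, and let θ be the linear involution on the root lattice determined by θ(α_{2i-1}) = α_{2i-1} for 1 ≤ i ≤ r and −θ(α_{2i}) = α_{2i-1} + α_{2i} + α_{2i+1} for 1 ≤ i ≤ r−1 (with the convention making −θ preserve R). Then no root α ∈ R satisfies θ(α) = −α. -/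
/-- The coordinate vector `ε_i` in `ℤ^ℕ` (indices `1, …, 2r` are used). -/
def eps (i : ℕ) : ℕ → ℤ := fun k => if k = i then 1 else 0

/-- The fixed-point-free involution `2k-1 ↔ 2k` on the index set `{1, …, 2r}`. -/
def tauAII (k : ℕ) : ℕ := if k % 2 = 1 then k + 1 else k - 1

/-- The involution `θ` of type AII: `θ(v) = -(v ∘ τ)`, i.e. `-θ` permutes the
`ε`-coordinates by the pairing `τ : 2k-1 ↔ 2k`; it satisfies
`-θ(α_i + ⋯ + α_{j-1}) = α_{i'} + ⋯ + α_{j'-1}` on the roots `ε_i - ε_j` of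
`A_{2r-1}`. -/
def thetaAII (v : ℕ → ℤ) : ℕ → ℤ := fun k => -(v (tauAII k))

/-! Since `-θ` only permutes coordinates by `τ`, the equation `θ α = -α` says that `α` is
constant on the pairs `{2k-1, 2k}`. A root `ε_i - ε_j` is not: its coordinate at `i` is `1`,
while its coordinate at the partner `τ i ≠ i` is `0` or `-1`. -/

-- `0` is a fixed point of `tauAII` because `0 - 1 = 0` in `ℕ`.
theorem tauAII_ne_self {k : ℕ} (hk : 1 ≤ k) : tauAII k ≠ k := by
  unfold tauAII
  split_ifs <;> omega

theorem thetaAII_eq_neg_iff (v : ℕ → ℤ) : thetaAII v = -v ↔ ∀ k, v (tauAII k) = v k := by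
  simp only [funext_iff, thetaAII, Pi.neg_apply, neg_inj]

theorem eps_sub_eps_apply_left {i j : ℕ} (hij : i ≠ j) : (eps i - eps j) i = 1 := by
  simp [eps, hij]

theorem eps_sub_eps_apply_nonpos {i j k : ℕ} (hk : k ≠ i) : (eps i - eps j) k ≤ 0 := by
  simp only [eps, Pi.sub_apply, hk, if_false]
  split_ifs <;> norm_num

theorem stmt10_general (i j : ℕ)
    (hi : 1 ≤ i) (hij : i ≠ j) :
    thetaAII (eps i - eps j) ≠ -(eps i - eps j) := by
  intro h
  have hpair := (thetaAII_eq_neg_iff _).1 h i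
  rw [eps_sub_eps_apply_left hij] at hpair
  have := eps_sub_eps_apply_nonpos (j := j) (tauAII_ne_self hi)
  omega

/-- In the root system of type `A_{2r-1}` (roots `ε_i - ε_j`,
`1 ≤ i ≠ j ≤ 2r`), no root `α` satisfies `θ(α) = -α` for the Satake involution data
of type AII. -/
theorem stmt10 (r : ℕ) (hr : 1 ≤ r) (i j : ℕ)
    (hi : 1 ≤ i) (hi' : i ≤ 2 * r) (hj : 1 ≤ j) (hj' : j ≤ 2 * r) (hij : i ≠ j) :
    thetaAII (eps i - eps j) ≠ -(eps i - eps j) :=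
  stmt10_general i j hi hij
end
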